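/- arXiv:2306.06041 — 4 statements merged into one kernel-verified Lean document; each statement's English description precedes it below -/
import Mathlib

section
/- Let n ≥ 1, let g be a real polynomial, and let M be a real symmetric n×n matrix whose eigenvalues (given by the spectral theorem for real symmetric matrices) are pairwise distinct and all nonzero. Assume the polynomial evaluation map x ↦ g(x) is injective on ℝ and that g(x) ≠ 0 for every x ≠ 0. Then for every real symmetric n×n matrix M′, the matrix equation g(M′) = g(M) has the unique solution M′ = M; that is, g(M′) = g(M) implies M′ = M. -/
open Matrix

/-!
A continuous injective `f` has a left inverse `f⁻¹`, which is continuous on every finite set.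
So for `a` with finite spectrum, `a = cfc (f⁻¹ ∘ f) a = cfc f⁻¹ (cfc f a)`: the functional
calculus recovers `a` from `f(a)`. Real symmetric matrices have finite spectrum, and
`g(M) = cfc g.eval M`.
-/

section FunctionalCalculus

variable {R A : Type*} {p : A → Prop} [CommSemiring R] [StarRing R] [MetricSpace R]
  [IsTopologicalSemiring R] [ContinuousStar R] [TopologicalSpace A] [Ring A] [StarRing A]
  [Algebra R A] [ContinuousFunctionalCalculus R A p] [ContinuousMap.UniqueHom R A]

theorem cfc_invFun_cfc {f : R → R} (hf : Function.Injective f) (hf_cont : Continuous f)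
    {a : A} (ha : p a) (ha_fin : (spectrum R a).Finite) :
    cfc (Function.invFun f) (cfc f a) = a := by
  rw [← cfc_comp _ _ a ha ((ha_fin.image f).continuousOn _) hf_cont.continuousOn,
    (Function.leftInverse_invFun hf).comp_eq_id, cfc_id R a ha]

theorem eq_of_cfc_eq_of_injective {f : R → R} (hf : Function.Injective f)
    (hf_cont : Continuous f) {a b : A} (ha : p a) (hb : p b) (ha_fin : (spectrum R a).Finite)
    (hb_fin : (spectrum R b).Finite) (h : cfc f a = cfc f b) : a = b := by
  rw [← cfc_invFun_cfc hf hf_cont ha ha_fin, h, cfc_invFun_cfc hf hf_cont hb hb_fin]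

end FunctionalCalculus

theorem polynomial_matrix_equation_unique_solution_general
    (n : ℕ) (g : Polynomial ℝ)
    (M : Matrix (Fin n) (Fin n) ℝ) (hM : M.IsHermitian)
    (hginj : Function.Injective fun x : ℝ => g.eval x)
    (M' : Matrix (Fin n) (Fin n) ℝ) (hM' : M'ᵀ = M')
    (heq : Polynomial.aeval M' g = Polynomial.aeval M g) :
    M' = M := by
  have hM'_sa : IsSelfAdjoint M' := by
    rwa [IsSelfAdjoint, star_eq_conjTranspose, conjTranspose_eq_transpose_of_trivial]
  rw [← cfc_polynomial g M' hM'_sa, ← cfc_polynomial g M hM.isSelfAdjoint] at heq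
  exact eq_of_cfc_eq_of_injective hginj g.continuous hM'_sa hM.isSelfAdjoint
    M'.finite_real_spectrum M.finite_real_spectrum heq

/-- If a real symmetric matrix `M` has pairwise distinct nonzero eigenvalues
(given by the spectral theorem), the scalar polynomial kernel `g` is injective on `ℝ`
and nonvanishing away from `0`, then `g(M') = g(M)` forces `M' = M` for every
real symmetric matrix `M'`. -/
theorem polynomial_matrix_equation_unique_solution
    (n : ℕ) (hn : 1 ≤ n) (g : Polynomial ℝ)
    (M : Matrix (Fin n) (Fin n) ℝ) (hM : M.IsHermitian)
    (hdist : Function.Injective hM.eigenvalues)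
    (hnz : ∀ i, hM.eigenvalues i ≠ 0)
    (hginj : Function.Injective fun x : ℝ => g.eval x)
    (hg0 : ∀ x : ℝ, x ≠ 0 → g.eval x ≠ 0)
    (M' : Matrix (Fin n) (Fin n) ℝ) (hM' : M'ᵀ = M')
    (heq : Polynomial.aeval M' g = Polynomial.aeval M g) :
    M' = M :=
  polynomial_matrix_equation_unique_solution_general n g M hM hginj M' hM' heq
end

section
/- Let n ≥ 1, let g be a real polynomial, let U be an n×n real orthogonal matrix (U · Uᵀ = 1), let λ : Fin n → ℝ, and set M = U · diag(λ) · Uᵀ. Consider the map Φ that sends a tuple μ = (μ_1, …, μ_n), where each μ i is a real root of the scalar equation g(x) = g(λ i), to the matrix U · diag(μ) · Uᵀ. Then Φ is an injective map from the product Π_i {x : ℝ | g(x) = g(λ i)} into the set of real symmetric matrices M′ satisfying g(M′) = g(M). Consequently, the matrix equation g(M′) = g(M) has at least Π_i s_i symmetric solutions, where s_i is the number of real roots of g(x) − g(λ i) = 0. -/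
open Matrix

private lemma myConjPow {n : ℕ} (U V : Matrix (Fin n) (Fin n) ℝ) (hUV : U * V = 1)
    (hVU : V * U = 1) (M : Matrix (Fin n) (Fin n) ℝ) (k : ℕ) :
    (U * M * V) ^ k = U * M ^ k * V := by
  induction k with
  | zero => simp [hUV]
  | succ k ih =>
      rw [pow_succ, pow_succ, ih]
      calc U * M ^ k * V * (U * M * V) = U * M ^ k * (V * U) * M * V := by
            simp only [Matrix.mul_assoc]
        _ = U * (M ^ k * M) * V := by rw [hVU]; simp only [Matrix.mul_assoc, Matrix.mul_one]
        _ = _ := by simp only [Matrix.mul_assoc]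

private lemma myAevalConj {n : ℕ} (U V : Matrix (Fin n) (Fin n) ℝ) (hUV : U * V = 1)
    (hVU : V * U = 1) (M : Matrix (Fin n) (Fin n) ℝ) (g : Polynomial ℝ) :
    Polynomial.aeval (U * M * V) g = U * Polynomial.aeval M g * V := by
  induction g using Polynomial.induction_on' with
  | add p q hp hq =>
      simp [hp, hq, Matrix.mul_add, Matrix.add_mul]
  | monomial k c =>
      rw [Polynomial.aeval_monomial, Polynomial.aeval_monomial,
        myConjPow U V hUV hVU M k]
      simp [Algebra.algebraMap_eq_smul_one, smul_mul_assoc, Matrix.mul_smul,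
        Matrix.smul_mul, Matrix.mul_assoc]

/-- The map sending a tuple of real roots `μ`, with `g(μ i) = g(λ i)` for each `i`, to the
matrix `U ⬝ diag μ ⬝ Uᵀ` is injective and lands in the set of symmetric solutions `M'` of
the matrix equation `g(M') = g(M)`, where `M = U ⬝ diag λ ⬝ Uᵀ` and `U` is orthogonal.
Consequently the equation has at least `∏ i, s i` symmetric solutions, with `s i` the
number of real roots of `g(x) = g(λ i)`. -/
theorem polynomial_matrix_equation_many_solutions
    (n : ℕ) (hn : 1 ≤ n) (g : Polynomial ℝ)
    (U : Matrix (Fin n) (Fin n) ℝ) (hU : U * Uᵀ = 1)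
    (lam : Fin n → ℝ) :
    Function.Injective
        (fun mu : (∀ i : Fin n, {x : ℝ // g.eval x = g.eval (lam i)}) =>
          U * Matrix.diagonal (fun i => (mu i : ℝ)) * Uᵀ) ∧
      ∀ mu : (∀ i : Fin n, {x : ℝ // g.eval x = g.eval (lam i)}),
        (U * Matrix.diagonal (fun i => (mu i : ℝ)) * Uᵀ) ∈
          {M' : Matrix (Fin n) (Fin n) ℝ |
            M'ᵀ = M' ∧
              Polynomial.aeval M' g =
                Polynomial.aeval (U * Matrix.diagonal lam * Uᵀ) g} := by
  have hU' : Uᵀ * U = 1 := mul_eq_one_comm.mp hU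
  have hdiag : ∀ d : Fin n → ℝ,
      Polynomial.aeval (Matrix.diagonal d) g =
        Matrix.diagonal (fun i => g.eval (d i)) := by
    intro d
    have := Polynomial.aeval_algHom_apply (Matrix.diagonalAlgHom (n := Fin n) (α := ℝ) ℝ) d g
    rw [show Matrix.diagonal d = Matrix.diagonalAlgHom (n := Fin n) (α := ℝ) ℝ d from rfl,
      this]
    show Matrix.diagonal _ = _
    refine congrArg Matrix.diagonal (funext fun i => ?_)
    have := Polynomial.aeval_algHom_apply (Pi.evalAlgHom ℝ (fun _ => ℝ) i) d g
    simpa using this.symm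
  constructor
  · intro mu nu h
    simp only at h
    have key : ∀ D : Matrix (Fin n) (Fin n) ℝ, Uᵀ * (U * D * Uᵀ) * U = D := by
      intro D
      calc Uᵀ * (U * D * Uᵀ) * U = (Uᵀ * U) * D * (Uᵀ * U) := by
            simp only [Matrix.mul_assoc]
        _ = D := by rw [hU']; simp
    have h2 : Matrix.diagonal (fun i => (mu i : ℝ)) =
        Matrix.diagonal (fun i => (nu i : ℝ)) := by
      have := congrArg (fun X => Uᵀ * X * U) h
      simpa only [key] using this
    have h3 := Matrix.diagonal_injective h2
    funext i
    exact Subtype.ext (congrFun h3 i)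
  · intro mu
    refine ⟨by simp [Matrix.transpose_mul, Matrix.mul_assoc, Matrix.diagonal_transpose], ?_⟩
    rw [myAevalConj U Uᵀ hU hU', myAevalConj U Uᵀ hU hU', hdiag, hdiag]
    have : (fun i => Polynomial.eval ((mu i : ℝ)) g) = fun i => Polynomial.eval (lam i) g :=
      funext fun i => (mu i).2
    rw [this]
end

section
/- Let n ≥ 1, let g be a real polynomial, let U be an n×n real orthogonal matrix (U · Uᵀ = 1), and let λ : Fin n → ℝ with λ i ≠ 0 for all i. Set M = U · diag(λ) · Uᵀ (so M is symmetric and invertible). Then for every vector x ∈ ℝⁿ, the Euclidean norms satisfy ‖g(M).mulVec x‖ ≤ (max_i |g(λ i)| / |λ i|) · ‖M.mulVec x‖. In particular, the generalized Rayleigh quotient ‖g(M)x‖² / ‖Mx‖² is bounded above by the largest eigenvalue of M⁻² g(M)², which equals max_i (g(λ i)/λ i)². -/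
/-!
Conjugation by the orthogonal matrix `U` commutes with polynomial evaluation and preserves
Euclidean norms, so with `y = Uᵀ x` the claim reduces to `‖g(λ) ⊙ y‖ ≤ C ‖λ ⊙ y‖`, which holds
coordinatewise because `|g(λᵢ)| ≤ C |λᵢ|` for `C = maxᵢ |g(λᵢ)| / |λᵢ|`.
-/

open Matrix Polynomial

theorem Polynomial.aeval_unitary_conj {S R : Type*} [CommSemiring S] [Semiring R] [StarMul R]
    [Algebra S R] (u : unitary R) (a : R) (p : S[X]) :
    aeval ((u : R) * a * star (u : R)) p = u * aeval a p * star (u : R) :=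
  aeval_algHom_apply (Unitary.conjStarAlgAut S R u) a p

theorem Matrix.aeval_diagonal {n R : Type*} [Fintype n] [DecidableEq n] [CommSemiring R]
    (d : n → R) (p : R[X]) : aeval (diagonal d) p = diagonal fun i => p.eval (d i) := by
  rw [← diagonalAlgHom_apply (R := R), aeval_algHom_apply, aeval_pi_apply]
  simp only [coe_aeval_eq_eval, diagonalAlgHom_apply]

theorem Matrix.norm_toLp_mulVec_of_mem_unitaryGroup {n 𝕜 : Type*} [Fintype n] [DecidableEq n]
    [RCLike 𝕜] {U : Matrix n n 𝕜} (hU : U ∈ unitaryGroup n 𝕜) (x : n → 𝕜) :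
    ‖WithLp.toLp 2 (U *ᵥ x)‖ = ‖WithLp.toLp 2 x‖ := by
  rw [← toEuclideanCLM_toLp]
  exact ContinuousLinearMap.norm_map_of_mem_unitary (Unitary.map_mem toEuclideanCLM hU) _

theorem EuclideanSpace.norm_le_mul_norm_of_forall_norm_le {ι 𝕜 : Type*} [Fintype ι] [RCLike 𝕜]
    {x y : EuclideanSpace 𝕜 ι} {C : ℝ} (hC : 0 ≤ C) (h : ∀ i, ‖x i‖ ≤ C * ‖y i‖) :
    ‖x‖ ≤ C * ‖y‖ := by
  refine (pow_le_pow_iff_left₀ (norm_nonneg _) (by positivity) two_ne_zero).mp ?_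
  rw [mul_pow, EuclideanSpace.norm_sq_eq, EuclideanSpace.norm_sq_eq, Finset.mul_sum]
  gcongr with i
  rw [← mul_pow]
  gcongr
  exact h i

theorem Matrix.norm_toLp_diagonal_mulVec_le {n 𝕜 : Type*} [Fintype n] [DecidableEq n] [RCLike 𝕜]
    {d e : n → 𝕜} {C : ℝ} (hC : 0 ≤ C) (hde : ∀ i, ‖d i‖ ≤ C * ‖e i‖) (y : n → 𝕜) :
    ‖WithLp.toLp 2 (diagonal d *ᵥ y)‖ ≤ C * ‖WithLp.toLp 2 (diagonal e *ᵥ y)‖ := by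
  refine EuclideanSpace.norm_le_mul_norm_of_forall_norm_le hC fun i => ?_
  simp only [mulVec_diagonal, norm_mul, ← mul_assoc]
  gcongr
  exact hde i

theorem polynomial_filter_rayleigh_bound_general
    (n : ℕ) (g : Polynomial ℝ)
    (U : Matrix (Fin n) (Fin n) ℝ) (hU : U * Uᵀ = 1)
    (lam : Fin n → ℝ) (hlam : ∀ i, lam i ≠ 0) :
    ∀ x : Fin n → ℝ,
      ‖(WithLp.equiv 2 (Fin n → ℝ)).symm
          ((Polynomial.aeval (U * Matrix.diagonal lam * Uᵀ) g).mulVec x)‖ ≤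
        (⨆ i : Fin n, |g.eval (lam i)| / |lam i|) *
          ‖(WithLp.equiv 2 (Fin n → ℝ)).symm
            ((U * Matrix.diagonal lam * Uᵀ).mulVec x)‖ := by
  intro x
  have hstar : star U = Uᵀ := by simp [star_eq_conjTranspose]
  have hUo : U ∈ unitaryGroup (Fin n) ℝ := mem_unitaryGroup_iff.mpr (hstar ▸ hU)
  set C := ⨆ i : Fin n, |g.eval (lam i)| / |lam i|
  have hC : 0 ≤ C := Real.iSup_nonneg fun i => by positivity
  have hbound : ∀ i, ‖g.eval (lam i)‖ ≤ C * ‖lam i‖ := fun i => by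
    rw [Real.norm_eq_abs, Real.norm_eq_abs, ← div_le_iff₀ (abs_pos.mpr (hlam i))]
    exact le_ciSup (f := fun i => |g.eval (lam i)| / |lam i|) (Set.finite_range _).bddAbove i
  have hconj := aeval_unitary_conj ⟨U, hUo⟩ (diagonal lam) g
  simp only [hstar, aeval_diagonal] at hconj
  simp only [WithLp.equiv_symm_apply, hconj, ← mulVec_mulVec,
    norm_toLp_mulVec_of_mem_unitaryGroup hUo]
  exact norm_toLp_diagonal_mulVec_le hC hbound _

/-- Generalized Rayleigh quotient bound: for `M = U ⬝ diag λ ⬝ Uᵀ` with `U` orthogonal and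
all `λ i ≠ 0`, the Euclidean norm of `g(M) x` is bounded by `max_i |g(λ i)|/|λ i|` times the
Euclidean norm of `M x`. -/
theorem polynomial_filter_rayleigh_bound
    (n : ℕ) (hn : 1 ≤ n) (g : Polynomial ℝ)
    (U : Matrix (Fin n) (Fin n) ℝ) (hU : U * Uᵀ = 1)
    (lam : Fin n → ℝ) (hlam : ∀ i, lam i ≠ 0) :
    ∀ x : Fin n → ℝ,
      ‖(WithLp.equiv 2 (Fin n → ℝ)).symm
          ((Polynomial.aeval (U * Matrix.diagonal lam * Uᵀ) g).mulVec x)‖ ≤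
        (⨆ i : Fin n, |g.eval (lam i)| / |lam i|) *
          ‖(WithLp.equiv 2 (Fin n → ℝ)).symm
            ((U * Matrix.diagonal lam * Uᵀ).mulVec x)‖ :=
  polynomial_filter_rayleigh_bound_general n g U hU lam hlam
end

section
/- Let M be an n×n real symmetric matrix, g a real polynomial, and x ∈ ℝⁿ a vector with M.mulVec x ≠ 0. For t ∈ ℝ define the filtered signal y_t = (M + t • g(M)).mulVec x, so y_0 = M.mulVec x. Then there exist C ≥ 0 and δ > 0 such that for all t with |t| < δ, the vector y_t is nonzero and ⟪y_0, y_t⟫ ≥ (1 − C·t²) · ‖y_0‖ · ‖y_t‖; i.e., the cosine similarity between the unperturbed filtered signal M x and the polynomial-augmented filtered signal (M + t·g(M)) x is at least 1 − C·t² for all sufficiently small t. -/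
open Matrix

/-!
Write `M x = u` and `g(M) x = v`, so the perturbed signal is `w = u + t • v`. The Gram determinant
`‖u‖²‖w‖² - ⟪u, w⟫²` equals `t² (‖u‖²‖v‖² - ⟪u, v⟫²)`, so `‖u‖‖w‖ - ⟪u, w⟫` is this quantity divided
by `‖u‖‖w‖ + ⟪u, w⟫`. For small `t` the inner product `⟪u, w⟫` stays above `‖u‖² / 2`, which bounds
the denominator from below and gives the quadratic deficit.
-/

/-- If `a / 2 ≤ i ≤ p` then `p - i = (p² - i²) / (p + i) ≤ (p² - i²) / a`, and `a / 2 ≤ p`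
turns this into a bound relative to `p`. -/
lemma one_sub_mul_sq_mul_le_of_sq_sub_sq_eq {a p i D t : ℝ} (ha : 0 < a) (hi : a / 2 ≤ i)
    (hip : i ≤ p) (hpi : p ^ 2 - i ^ 2 = t ^ 2 * D) :
    (1 - 2 * D / a ^ 2 * t ^ 2) * p ≤ i := by
  have hdiff : (p - i) * a ≤ t ^ 2 * D := by
    nlinarith [mul_nonneg (sub_nonneg.mpr hip) (by linarith : 0 ≤ p + i - a)]
  have htD : 0 ≤ t ^ 2 * D := by nlinarith
  have hrel : (p - i) * a ^ 2 ≤ (2 * D / a ^ 2 * t ^ 2 * p) * a ^ 2 := by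
    have : 2 * D / a ^ 2 * t ^ 2 * p * a ^ 2 = 2 * (t ^ 2 * D) * p := by field_simp
    rw [this]
    nlinarith [mul_le_mul_of_nonneg_left (by linarith : a / 2 ≤ p) htD]
  nlinarith [le_of_mul_le_mul_right hrel (by positivity)]

section InnerProductSpace

variable {E : Type*} [NormedAddCommGroup E] [InnerProductSpace ℝ E]

noncomputable def gramDet (u v : E) : ℝ := ‖u‖ ^ 2 * ‖v‖ ^ 2 - inner ℝ u v ^ 2

lemma gramDet_nonneg (u v : E) : 0 ≤ gramDet u v := by
  have h := abs_real_inner_le_norm u v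
  rw [gramDet, ← sq_abs (inner ℝ u v), ← mul_pow, sub_nonneg]
  exact pow_le_pow_left₀ (abs_nonneg _) h 2

lemma gramDet_add_smul_right (u v : E) (t : ℝ) :
    gramDet u (u + t • v) = t ^ 2 * gramDet u v := by
  simp only [gramDet, norm_add_sq_real, inner_add_right, real_inner_smul_right,
    real_inner_self_eq_norm_sq, norm_smul, Real.norm_eq_abs, mul_pow, sq_abs]
  ring

lemma half_norm_sq_le_inner_add_smul {u v : E} {t : ℝ} (ht : |t| * ‖v‖ ≤ ‖u‖ / 2) :
    ‖u‖ ^ 2 / 2 ≤ inner ℝ u (u + t • v) := by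
  have hcs : |t * inner ℝ u v| ≤ |t| * ‖v‖ * ‖u‖ := by
    rw [abs_mul, mul_assoc, mul_comm ‖v‖]
    exact mul_le_mul_of_nonneg_left (abs_real_inner_le_norm u v) (abs_nonneg t)
  rw [inner_add_right, real_inner_smul_right, real_inner_self_eq_norm_sq]
  nlinarith [neg_abs_le (t * inner ℝ u v), norm_nonneg u]

theorem exists_one_sub_mul_sq_mul_norm_le_inner_add_smul {u : E} (hu : u ≠ 0) (v : E) :
    ∃ C : ℝ, 0 ≤ C ∧ ∃ δ : ℝ, 0 < δ ∧ ∀ t : ℝ, |t| < δ →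
      u + t • v ≠ 0 ∧ (1 - C * t ^ 2) * (‖u‖ * ‖u + t • v‖) ≤ inner ℝ u (u + t • v) := by
  have hu : 0 < ‖u‖ := norm_pos_iff.mpr hu
  refine ⟨2 * gramDet u v / (‖u‖ ^ 2) ^ 2, by have := gramDet_nonneg u v; positivity,
    ‖u‖ / (2 * (‖v‖ + 1)), by positivity, fun t ht => ?_⟩
  have hsmall : |t| * ‖v‖ ≤ ‖u‖ / 2 := by
    rw [lt_div_iff₀ (by positivity)] at ht
    nlinarith [abs_nonneg t]
  have hhalf := half_norm_sq_le_inner_add_smul hsmall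
  refine ⟨fun h => by rw [h, inner_zero_right] at hhalf; linarith [pow_pos hu 2], ?_⟩
  refine one_sub_mul_sq_mul_le_of_sq_sub_sq_eq (by positivity) hhalf
    (real_inner_le_norm u _) ?_
  rw [mul_pow, ← gramDet_add_smul_right, gramDet]

end InnerProductSpace

theorem filtered_signal_cosine_similarity_bound_general
    (n : ℕ) (M : Matrix (Fin n) (Fin n) ℝ) (g : Polynomial ℝ)
    (x : Fin n → ℝ) (hx : M.mulVec x ≠ 0) :
    ∃ C : ℝ, 0 ≤ C ∧ ∃ δ : ℝ, 0 < δ ∧ ∀ t : ℝ, |t| < δ →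
      (M + t • Polynomial.aeval M g).mulVec x ≠ 0 ∧
      (1 - C * t ^ 2) *
          (‖(WithLp.equiv 2 (Fin n → ℝ)).symm (M.mulVec x)‖ *
            ‖(WithLp.equiv 2 (Fin n → ℝ)).symm ((M + t • Polynomial.aeval M g).mulVec x)‖) ≤
        (inner ℝ ((WithLp.equiv 2 (Fin n → ℝ)).symm (M.mulVec x))
            ((WithLp.equiv 2 (Fin n → ℝ)).symm ((M + t • Polynomial.aeval M g).mulVec x)) : ℝ) := by
  let e := (WithLp.equiv 2 (Fin n → ℝ)).symm
  have he : ∀ t : ℝ, e ((M + t • Polynomial.aeval M g).mulVec x)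
      = e (M.mulVec x) + t • e ((Polynomial.aeval M g).mulVec x) := fun t => by
    rw [add_mulVec, smul_mulVec]
    rfl
  obtain ⟨C, hC, δ, hδ, hbound⟩ := exists_one_sub_mul_sq_mul_norm_le_inner_add_smul
    (e.injective.ne hx) (e ((Polynomial.aeval M g).mulVec x))
  refine ⟨C, hC, δ, hδ, fun t ht => ?_⟩
  obtain ⟨hne, hle⟩ := hbound t ht
  rw [← he] at hne hle
  exact ⟨fun h => hne (by rw [h]; rfl), hle⟩

/-- Noise-free stability of the polynomial-augmented graph filter: for a symmetric matrix `M`,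
a polynomial `g`, and a signal `x` with `M x ≠ 0`, the cosine similarity between the filtered
signals `M x` and `(M + t • g(M)) x` is at least `1 - C t²` for all sufficiently small `t`. -/
theorem filtered_signal_cosine_similarity_bound
    (n : ℕ) (M : Matrix (Fin n) (Fin n) ℝ) (hM : Mᵀ = M) (g : Polynomial ℝ)
    (x : Fin n → ℝ) (hx : M.mulVec x ≠ 0) :
    ∃ C : ℝ, 0 ≤ C ∧ ∃ δ : ℝ, 0 < δ ∧ ∀ t : ℝ, |t| < δ →
      (M + t • Polynomial.aeval M g).mulVec x ≠ 0 ∧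
      (1 - C * t ^ 2) *
          (‖(WithLp.equiv 2 (Fin n → ℝ)).symm (M.mulVec x)‖ *
            ‖(WithLp.equiv 2 (Fin n → ℝ)).symm ((M + t • Polynomial.aeval M g).mulVec x)‖) ≤
        (inner ℝ ((WithLp.equiv 2 (Fin n → ℝ)).symm (M.mulVec x))
            ((WithLp.equiv 2 (Fin n → ℝ)).symm ((M + t • Polynomial.aeval M g).mulVec x)) : ℝ) :=
  filtered_signal_cosine_similarity_bound_general n M g x hx
end
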